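/- Let m = -1, and let λ, b, c be real constants. Define B(x) = x(b - λ·arcsinh(x))·√(x²+1) + c(x²+1). Then B satisfies B''(x) - 1/(x²+1)² · (x(x²+1)B'(x) + 2B(x)) + 2λ = 0 for all x ∈ ℝ. -/

import Mathlib

open Real

/-- The function `B` from (2.9) for `m = -1`. -/
noncomputable def Bneg (lam b c : ℝ) (x : ℝ) : ℝ :=
  x * (b - lam * Real.arsinh x) * Real.sqrt (x ^ 2 + 1) + c * (x ^ 2 + 1)

/-!
The operator `B ↦ B'' - (x(x²+1)B' + 2B)/(x²+1)²` is linear. Both `x √(x²+1)` and `x² + 1` are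
in its kernel, and since `arsinh' = 1/√(x²+1)` it sends `x √(x²+1) arsinh x` to `2`. Writing
`B = b · x√(x²+1) - λ · x√(x²+1) arsinh x + c (x²+1)`, the operator therefore sends `B` to `-2λ`.
-/

noncomputable def quasiEinsteinOp (m x B B' B'' : ℝ) : ℝ :=
  B'' + m * (x * (x ^ 2 + 1) * B' + 2 * B) / (x ^ 2 + 1) ^ 2

theorem deriv_deriv_eq_of_hasDerivAt {𝕜 F : Type*} [NontriviallyNormedField 𝕜]
    [NormedAddCommGroup F] [NormedSpace 𝕜 F] {f f' : 𝕜 → F} {f'' : F} {x : 𝕜}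
    (hf : ∀ y, HasDerivAt f (f' y) y) (hf' : HasDerivAt f' f'' x) :
    deriv (deriv f) x = f'' := by
  rw [funext fun y => (hf y).deriv]
  exact hf'.deriv

section SqrtSqAddOne

variable (x : ℝ)

theorem sqrt_sq_add_one_pos : 0 < √(x ^ 2 + 1) := by positivity

theorem sq_sqrt_sq_add_one : √(x ^ 2 + 1) ^ 2 = x ^ 2 + 1 := sq_sqrt (by positivity)

theorem hasDerivAt_sq_add_one : HasDerivAt (fun y => y ^ 2 + 1) (2 * x) x := by
  simpa using (hasDerivAt_pow 2 x).add_const 1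

theorem hasDerivAt_sqrt_sq_add_one :
    HasDerivAt (fun y => √(y ^ 2 + 1)) (x / √(x ^ 2 + 1)) x := by
  convert ((hasDerivAt_pow 2 x).add_const 1).sqrt (by positivity) using 1
  field_simp
  ring

theorem hasDerivAt_arsinh' : HasDerivAt arsinh (√(x ^ 2 + 1))⁻¹ x := by
  simpa only [add_comm] using hasDerivAt_arsinh x

theorem hasDerivAt_mul_sqrt_sq_add_one :
    HasDerivAt (fun y => y * √(y ^ 2 + 1)) ((2 * x ^ 2 + 1) / √(x ^ 2 + 1)) x := by
  refine ((hasDerivAt_id' x).mul (hasDerivAt_sqrt_sq_add_one x)).congr_deriv ?_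
  have := sqrt_sq_add_one_pos x
  field_simp
  linear_combination sq_sqrt_sq_add_one x

theorem hasDerivAt_deriv_mul_sqrt_sq_add_one :
    HasDerivAt (fun y => (2 * y ^ 2 + 1) / √(y ^ 2 + 1))
      (x * (2 * x ^ 2 + 3) / √(x ^ 2 + 1) ^ 3) x := by
  have hs := sqrt_sq_add_one_pos x
  have hp : HasDerivAt (fun y : ℝ => 2 * y ^ 2 + 1) (2 * (2 * x)) x := by
    simpa using ((hasDerivAt_pow 2 x).const_mul 2).add_const 1
  refine (hp.div (hasDerivAt_sqrt_sq_add_one x) hs.ne').congr_deriv ?_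
  field_simp
  linear_combination (4 * x) * sq_sqrt_sq_add_one x

theorem hasDerivAt_mul_sqrt_sq_add_one_mul_arsinh :
    HasDerivAt (fun y => y * √(y ^ 2 + 1) * arsinh y)
      ((2 * x ^ 2 + 1) / √(x ^ 2 + 1) * arsinh x + x) x := by
  have hs := sqrt_sq_add_one_pos x
  refine ((hasDerivAt_mul_sqrt_sq_add_one x).mul (hasDerivAt_arsinh' x)).congr_deriv ?_
  field_simp

theorem hasDerivAt_deriv_mul_sqrt_sq_add_one_mul_arsinh :
    HasDerivAt (fun y => (2 * y ^ 2 + 1) / √(y ^ 2 + 1) * arsinh y + y)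
      (x * (2 * x ^ 2 + 3) / √(x ^ 2 + 1) ^ 3 * arsinh x + (2 * x ^ 2 + 1) / (x ^ 2 + 1) + 1) x := by
  have hs := sqrt_sq_add_one_pos x
  refine (((hasDerivAt_deriv_mul_sqrt_sq_add_one x).mul (hasDerivAt_arsinh' x)).add
    (hasDerivAt_id' x)).congr_deriv ?_
  have hsq := sq_sqrt_sq_add_one x
  set s := √(x ^ 2 + 1)
  rw [← hsq]
  field_simp

end SqrtSqAddOne

section QuasiEinsteinMinusOne

variable (x : ℝ)

theorem quasiEinsteinOp_mul_sqrt_sq_add_one :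
    quasiEinsteinOp (-1) x (x * √(x ^ 2 + 1)) ((2 * x ^ 2 + 1) / √(x ^ 2 + 1))
      (x * (2 * x ^ 2 + 3) / √(x ^ 2 + 1) ^ 3) = 0 := by
  have hs := sqrt_sq_add_one_pos x
  have hsq := sq_sqrt_sq_add_one x
  set s := √(x ^ 2 + 1)
  rw [quasiEinsteinOp, ← hsq]
  field_simp
  ring

theorem quasiEinsteinOp_sq_add_one : quasiEinsteinOp (-1) x (x ^ 2 + 1) (2 * x) 2 = 0 := by
  rw [quasiEinsteinOp]
  field_simp
  ring

theorem quasiEinsteinOp_mul_sqrt_sq_add_one_mul_arsinh :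
    quasiEinsteinOp (-1) x (x * √(x ^ 2 + 1) * arsinh x)
      ((2 * x ^ 2 + 1) / √(x ^ 2 + 1) * arsinh x + x)
      (x * (2 * x ^ 2 + 3) / √(x ^ 2 + 1) ^ 3 * arsinh x + (2 * x ^ 2 + 1) / (x ^ 2 + 1) + 1) =
      2 := by
  have hs := sqrt_sq_add_one_pos x
  have hsq := sq_sqrt_sq_add_one x
  set s := √(x ^ 2 + 1)
  rw [quasiEinsteinOp, ← hsq]
  field_simp
  linear_combination (-s) * hsq

end QuasiEinsteinMinusOne

theorem Bneg_eq (lam b c : ℝ) :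
    Bneg lam b c = fun y =>
      b * (y * √(y ^ 2 + 1)) - lam * (y * √(y ^ 2 + 1) * arsinh y) + c * (y ^ 2 + 1) := by
  funext y
  rw [Bneg]
  ring

/-- For `m = -1`, `B` satisfies `B'' - 1/(x²+1)² (x(x²+1)B' + 2B) + 2λ = 0`. -/
theorem Bneg_ode (lam b c : ℝ) :
    ∀ x : ℝ,
      deriv (deriv (Bneg lam b c)) x
        - 1 / (x ^ 2 + 1) ^ 2 *
            (x * (x ^ 2 + 1) * deriv (Bneg lam b c) x + 2 * Bneg lam b c x)
        + 2 * lam = 0 := by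
  intro x
  have hB y := (((hasDerivAt_mul_sqrt_sq_add_one y).const_mul b).sub
    ((hasDerivAt_mul_sqrt_sq_add_one_mul_arsinh y).const_mul lam)).add
    ((hasDerivAt_sq_add_one y).const_mul c) |>.congr_of_eventuallyEq (.of_eq (Bneg_eq lam b c))
  have hB' := (((hasDerivAt_deriv_mul_sqrt_sq_add_one x).const_mul b).sub
    ((hasDerivAt_deriv_mul_sqrt_sq_add_one_mul_arsinh x).const_mul lam)).add
    (((hasDerivAt_id' x).const_mul 2).const_mul c)
  rw [deriv_deriv_eq_of_hasDerivAt hB hB', (hB x).deriv, Bneg_eq]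
  have hu := quasiEinsteinOp_mul_sqrt_sq_add_one x
  have hv := quasiEinsteinOp_sq_add_one x
  have hw := quasiEinsteinOp_mul_sqrt_sq_add_one_mul_arsinh x
  rw [quasiEinsteinOp] at hu hv hw
  linear_combination b * hu - lam * hw + c * hv
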